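/- Let {𝓗,Γ} be a B-generalized boundary pair for A* with Weyl function M. Then the subspace 𝓗_s := closure of ran Im M(λ) is independent of λ ∈ ℂ∖ℝ, and there exist an ordinary boundary triple {𝓗_s, Γ₀⁰, Γ₁⁰} for A* with Weyl function M₀, a bounded selfadjoint operator E ∈ 𝓑(𝓗), and G ∈ 𝓑(𝓗,𝓗_s) with ker G = 𝓗 ⊖ 𝓗_s, such that Γ = {(f̂, (u, Eu + G*Γ₁⁰f̂)) : f̂ ∈ A*, u ∈ 𝓗, Gu = Γ₀⁰f̂} and M(λ) = G*M₀(λ)G + E for all λ ∈ ℂ∖ℝ. -/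

import Mathlib

/-!
Green's identity turns `Γ ∩ {((f, λf), ·)}` into the graph of `u ↦ (γ(λ)u, M(λ)u)` and gives
`⟪v, Im M(λ) u⟫ = Im λ · ⟪γ(λ)v, γ(λ)u⟫`. Hence `(ran Im M(λ))ᗮ = ker γ(λ)`, which is the set of
`u` with `((0, 0), (u, b)) ∈ Γ` for some `b`, so `𝓗_s` does not depend on `λ`.
With `G = (Im M(i))^{1/2}` one has `‖G u‖ = ‖γ(i) u‖`, so `G u ↦ γ(i) u` extends to an isometry
`U` of `𝓗_s` into `𝔑_i(A*)`; density of `dom Γ` in `A*` makes it onto. Along the decomposition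
`A* = A₀ ∔ 𝔑_i(A*)` the ordinary triple is `Γ⁰(q + (Uv, iUv)) = (v, U*(q₂ + i q₁) + i v)`, and
Green's identity for `Γ` identifies `Γ` with `Γ⁰` twisted by `G` and `E = Re M(i)`.
-/

noncomputable section

open Filter Topology

namespace BT

local notation "⟪" x ", " y "⟫" => @inner ℂ _ _ x y

section Ops
variable {α β γ' : Type*}

def domR (T : Set (α × β)) : Set α := {x | ∃ y, (x, y) ∈ T}
def ranR (T : Set (α × β)) : Set β := {y | ∃ x, (x, y) ∈ T}
def kerR [Zero β] (T : Set (α × β)) : Set α := {x | (x, (0 : β)) ∈ T}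
def mulR [Zero α] (T : Set (α × β)) : Set β := {y | ((0 : α), y) ∈ T}
def invR (T : Set (α × β)) : Set (β × α) := {p | (p.2, p.1) ∈ T}
def compR (T₂ : Set (β × γ')) (T₁ : Set (α × β)) : Set (α × γ') :=
  {p | ∃ y, (p.1, y) ∈ T₁ ∧ (y, p.2) ∈ T₂}
def csum [Add α] [Add β] (T₁ T₂ : Set (α × β)) : Set (α × β) :=
  {p | ∃ q ∈ T₁, ∃ r ∈ T₂, p = (q.1 + r.1, q.2 + r.2)}

def IsLinRel {M : Type*} [AddCommGroup M] [Module ℂ M] (s : Set M) : Prop :=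
  ∃ p : Submodule ℂ M, (p : Set M) = s

def IsBddRel [Norm α] [Norm β] (T : Set (α × β)) : Prop :=
  ∃ C : ℝ, ∀ p ∈ T, ‖p.2‖ ≤ C * ‖p.1‖

def BddInv [NormedAddCommGroup α] (T : Set (α × α)) : Prop :=
  (∀ v, ∃ p ∈ T, p.2 = v) ∧ (∀ p ∈ T, ∀ q ∈ T, p.2 = q.2 → p.1 = q.1) ∧
    ∃ C : ℝ, ∀ p ∈ T, ‖p.1‖ ≤ C * ‖p.2‖
end Ops

section Shifts
variable {α : Type*} [AddCommGroup α] [Module ℂ α]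

def shiftSub (T : Set (α × α)) (l : ℂ) : Set (α × α) :=
  {p | ∃ q ∈ T, p = (q.1, q.2 - l • q.1)}
def shiftAdd (T : Set (α × α)) (l : ℂ) : Set (α × α) :=
  {p | ∃ q ∈ T, p = (q.1, q.2 + l • q.1)}
def hatN (T : Set (α × α)) (l : ℂ) : Set (α × α) := {p ∈ T | p.2 = l • p.1}
def Nlam (T : Set (α × α)) (l : ℂ) : Set α := {f | (f, l • f) ∈ T}
def Hrel (A0s : Set (α × α)) (l : ℂ) : Set (α × (α × α)) :=
  {q | q.2 ∈ A0s ∧ q.2.2 - l • q.2.1 = q.1}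
end Shifts

section InnerDefs
variable {E F : Type*} [NormedAddCommGroup E] [InnerProductSpace ℂ E]
  [NormedAddCommGroup F] [InnerProductSpace ℂ F]

def adjR (S : Set (F × E)) : Set (E × F) :=
  {p | ∀ q ∈ S, ⟪p.1, q.2⟫ = ⟪p.2, q.1⟫}

def IsClosedSymRel (A : Set (E × E)) : Prop :=
  IsLinRel A ∧ IsClosed A ∧ A ⊆ adjR A

def kIP (p q : E × E) : ℂ := -Complex.I * ⟪q.1, p.2⟫ + Complex.I * ⟪q.2, p.1⟫

def kreinOrth (S : Set (E × E)) : Set (E × E) := {v | ∀ u ∈ S, kIP u v = 0}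

def GreenPair (Γ : Set ((E × E) × (F × F))) : Prop :=
  ∀ p ∈ Γ, ∀ q ∈ Γ,
    ⟪q.1.1, p.1.2⟫ - ⟪q.1.2, p.1.1⟫ = ⟪q.2.1, p.2.2⟫ - ⟪q.2.2, p.2.1⟫

def G0 (Γ : Set ((E × E) × (F × F))) : Set ((E × E) × F) := {p | ∃ h', (p.1, (p.2, h')) ∈ Γ}
def G1 (Γ : Set ((E × E) × (F × F))) : Set ((E × E) × F) := {p | ∃ h, (p.1, (h, p.2)) ∈ Γ}
def A0 (Γ : Set ((E × E) × (F × F))) : Set (E × E) := kerR (G0 Γ)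
def A1 (Γ : Set ((E × E) × (F × F))) : Set (E × E) := kerR (G1 Γ)
def weyl (Γ : Set ((E × E) × (F × F))) (l : ℂ) : Set (F × F) :=
  {p | ∃ f : E, ((f, l • f), p) ∈ Γ}
def gfield (Γ : Set ((E × E) × (F × F))) (l : ℂ) : Set (F × E) :=
  {p | ∃ h', ((p.2, l • p.2), (p.1, h')) ∈ Γ}

def kreinAdj (Γ : Set ((E × E) × (F × F))) : Set ((F × F) × (E × E)) :=
  {q | ∀ p ∈ Γ, kIP p.1 q.2 = kIP p.2 q.1}

def IsIsomPair (A : Set (E × E)) (Γ : Set ((E × E) × (F × F))) : Prop :=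
  IsLinRel Γ ∧ domR Γ ⊆ adjR A ∧ GreenPair Γ
def IsDomDense (A : Set (E × E)) (Γ : Set ((E × E) × (F × F))) : Prop :=
  closure (domR Γ) = adjR A
def IsABPair (A : Set (E × E)) (Γ : Set ((E × E) × (F × F))) : Prop :=
  IsIsomPair A Γ ∧ IsDomDense A Γ ∧ Dense (ranR (G0 Γ)) ∧ A0 Γ = adjR (A0 Γ)
def IsBPair (A : Set (E × E)) (Γ : Set ((E × E) × (F × F))) : Prop :=
  IsABPair A Γ ∧ ranR (G0 Γ) = Set.univ
def IsUnitaryPair (A : Set (E × E)) (Γ : Set ((E × E) × (F × F))) : Prop :=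
  GreenPair Γ ∧ domR Γ ⊆ adjR A ∧ IsDomDense A Γ ∧ invR Γ = kreinAdj Γ
def IsUnitaryBT (A : Set (E × E)) (Γ : Set ((E × E) × (F × F))) : Prop :=
  IsUnitaryPair A Γ ∧ mulR Γ = {0}
def IsOrdinaryBT (A : Set (E × E)) (Γ : Set ((E × E) × (F × F))) : Prop :=
  IsIsomPair A Γ ∧ mulR Γ = {0} ∧ domR Γ = adjR A ∧ ranR Γ = Set.univ

def Erel (Γ : Set ((E × E) × (F × F))) (m : ℂ) : Set (F × F) :=
  {p | ∃ u' v', (p.1, u') ∈ weyl Γ m ∧ (p.1, v') ∈ weyl Γ ((starRingEnd ℂ) m) ∧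
        p.2 = (2 : ℂ)⁻¹ • (u' + v')}

def triTransform (Γ : Set ((E × E) × (F × F))) (e : Set (F × F)) :
    Set ((E × E) × (F × F)) :=
  {q | ∃ h h' w, (q.1, (h, h')) ∈ Γ ∧ (h, w) ∈ e ∧ q.2 = (h, w + h')}

def formVal (l : ℂ) (u u' : F) : ℝ :=
  ((l - (starRingEnd ℂ) l)⁻¹ * (⟪u, u'⟫ - ⟪u', u⟫)).re

def FormClosable (l : ℂ) (Ms : Set (F × F)) : Prop :=
  ∀ u u' : ℕ → F, (∀ n, (u n, u' n) ∈ Ms) →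
    Tendsto u atTop (nhds (0 : F)) →
    Tendsto (fun nm : ℕ × ℕ => formVal l (u nm.1 - u nm.2) (u' nm.1 - u' nm.2)) atTop
      (nhds (0 : ℝ)) →
    Tendsto (fun n => formVal l (u n) (u' n)) atTop (nhds (0 : ℝ))

def formClosureDom (l : ℂ) (Ms : Set (F × F)) : Set F :=
  {v | ∃ u u' : ℕ → F, (∀ n, (u n, u' n) ∈ Ms) ∧ Tendsto u atTop (nhds v) ∧
    Tendsto (fun nm : ℕ × ℕ => formVal l (u nm.1 - u nm.2) (u' nm.1 - u' nm.2)) atTop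
      (nhds (0 : ℝ))}

end InnerDefs

section CompleteDefs
variable {F : Type*} [NormedAddCommGroup F] [InnerProductSpace ℂ F] [CompleteSpace F]

def IsNevFun (M₀ : ℂ → F →L[ℂ] F) : Prop :=
  DifferentiableOn ℂ M₀ {l : ℂ | l.im ≠ 0} ∧
  (∀ l : ℂ, l.im ≠ 0 → M₀ ((starRingEnd ℂ) l) = ContinuousLinearMap.adjoint (M₀ l)) ∧
  (∀ l : ℂ, 0 < l.im → ∀ u, 0 ≤ (⟪u, M₀ l u⟫).im)

def ImOp (Tb : F →L[ℂ] F) : F →L[ℂ] F :=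
  ((2 : ℂ) * Complex.I)⁻¹ • (Tb - ContinuousLinearMap.adjoint Tb)

end CompleteDefs

variable {E F : Type*} [NormedAddCommGroup E] [InnerProductSpace ℂ E] [CompleteSpace E]
  [NormedAddCommGroup F] [InnerProductSpace ℂ F] [CompleteSpace F]

instance (p : Submodule ℂ F) : CompleteSpace p.topologicalClosure :=
  (Submodule.isClosed_topologicalClosure p).completeSpace_coe

/-- The range of `Im M(l)` for the (bounded, everywhere defined) Weyl function of a
B-generalized boundary pair. -/
def ranIm (Γ : Set ((E × E) × (F × F))) (l : ℂ) : Set F :=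
  {w | ∃ u u' v', (u, u') ∈ weyl Γ l ∧ (u, v') ∈ weyl Γ ((starRingEnd ℂ) l) ∧
      w = ((2 : ℂ) * Complex.I)⁻¹ • (u' - v')}

/-- `𝓗_s`, the closure of `ran Im M(l)`. -/
def HsSub (Γ : Set ((E × E) × (F × F))) (l : ℂ) : Submodule ℂ F :=
  (Submodule.span ℂ (ranIm Γ l)).topologicalClosure

instance (Γ : Set ((E × E) × (F × F))) (l : ℂ) : CompleteSpace (HsSub Γ l) :=
  (Submodule.isClosed_topologicalClosure _).completeSpace_coe

end BT

section Operators

variable {𝕜 H K : Type*} [RCLike 𝕜] [NormedAddCommGroup H] [InnerProductSpace 𝕜 H]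
  [NormedAddCommGroup K] [InnerProductSpace 𝕜 K]

/-- Hellinger–Toeplitz for a pair of formally adjoint operators. -/
theorem LinearMap.continuous_of_inner_map_eq [CompleteSpace H] [CompleteSpace K]
    {T : H →ₗ[𝕜] K} {S : K →ₗ[𝕜] H} (hTS : ∀ x y, inner 𝕜 (T x) y = inner 𝕜 x (S y)) :
    Continuous T := by
  refine T.continuous_of_seq_closed_graph fun u x y hu hTu => ext_inner_right 𝕜 fun z => ?_
  refine tendsto_nhds_unique (hTu.inner (𝕜 := 𝕜) tendsto_const_nhds) ?_
  simp_rw [Function.comp_apply, hTS]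
  exact hu.inner (𝕜 := 𝕜) tendsto_const_nhds

theorem LinearMap.norm_extendOfNorm_apply [CompleteSpace K] {X : Type*} [AddCommGroup X]
    [Module 𝕜 X] {f : X →ₗ[𝕜] K} {e : X →ₗ[𝕜] H} (h_dense : DenseRange e)
    (h_norm : ∀ x, ‖f x‖ = ‖e x‖) (z : H) : ‖f.extendOfNorm e z‖ = ‖z‖ := by
  refine h_dense.induction (fun z ⟨x, hx⟩ => ?_) (isClosed_eq (by fun_prop) continuous_norm) z
  rw [← hx, LinearMap.extendOfNorm_eq h_dense ⟨1, fun x => by simp [h_norm]⟩, h_norm]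

end Operators

theorem CFC.inner_sqrt_apply_sqrt_apply {H : Type*} [NormedAddCommGroup H]
    [InnerProductSpace ℂ H] [CompleteSpace H] {R : H →L[ℂ] H} (hR : 0 ≤ R) (x y : H) :
    inner ℂ (CFC.sqrt R x) (CFC.sqrt R y) = inner ℂ x (R y) := by
  rw [← ContinuousLinearMap.adjoint_inner_right, (CFC.sqrt_nonneg R).isSelfAdjoint.adjoint_eq,
    ← mul_apply_eq_comp, CFC.sqrt_mul_sqrt_self R hR]

namespace BT

local notation "⟪" x ", " y "⟫" => @inner ℂ _ _ x y

open ComplexConjugate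
open Complex (I)
open scoped ComplexStarModule

namespace IsLinRel

variable {M : Type*} [AddCommGroup M] [Module ℂ M] {s : Set M}

lemma zero_mem (h : IsLinRel s) : (0 : M) ∈ s := by
  obtain ⟨p, rfl⟩ := h; exact p.zero_mem

lemma add_mem (h : IsLinRel s) {a b : M} (ha : a ∈ s) (hb : b ∈ s) : a + b ∈ s := by
  obtain ⟨p, rfl⟩ := h; exact p.add_mem ha hb

lemma smul_mem (h : IsLinRel s) (c : ℂ) {a : M} (ha : a ∈ s) : c • a ∈ s := by
  obtain ⟨p, rfl⟩ := h; exact p.smul_mem c ha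

lemma sub_mem (h : IsLinRel s) {a b : M} (ha : a ∈ s) (hb : b ∈ s) : a - b ∈ s := by
  obtain ⟨p, rfl⟩ := h; exact p.sub_mem ha hb

lemma neg_mem (h : IsLinRel s) {a : M} (ha : a ∈ s) : -a ∈ s := by
  obtain ⟨p, rfl⟩ := h; exact p.neg_mem ha

section

variable {N : Type*} [AddCommGroup N] [Module ℂ N]

lemma image (h : IsLinRel s) (f : M →ₗ[ℂ] N) : IsLinRel (f '' s) := by
  obtain ⟨p, rfl⟩ := h; exact ⟨p.map f, Submodule.map_coe f p⟩

lemma preimage (h : IsLinRel s) (f : N →ₗ[ℂ] M) : IsLinRel (f ⁻¹' s) := by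
  obtain ⟨p, rfl⟩ := h; exact ⟨p.comap f, Submodule.comap_coe f p⟩

lemma prod_univ (h : IsLinRel s) : IsLinRel (s ×ˢ (Set.univ : Set N)) := by
  obtain ⟨p, rfl⟩ := h; exact ⟨p.prod ⊤, by simp⟩

end

variable {X Y : Type*} [AddCommGroup X] [Module ℂ X] [AddCommGroup Y] [Module ℂ Y]
  {g : Set (X × Y)}

lemma eq_of_mem (hg : IsLinRel g) (hmul : ∀ y, ((0 : X), y) ∈ g → y = 0) {x : X} {y y' : Y}
    (hy : (x, y) ∈ g) (hy' : (x, y') ∈ g) : y = y' :=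
  sub_eq_zero.1 <| hmul _ <| by simpa using hg.sub_mem hy hy'

noncomputable def toLinearMap (hg : IsLinRel g) (htot : ∀ x, ∃ y, (x, y) ∈ g)
    (hmul : ∀ y, ((0 : X), y) ∈ g → y = 0) : X →ₗ[ℂ] Y where
  toFun x := (htot x).choose
  map_add' x x' := hg.eq_of_mem hmul (htot _).choose_spec <| by
    simpa using hg.add_mem (htot x).choose_spec (htot x').choose_spec
  map_smul' c x := hg.eq_of_mem hmul (htot _).choose_spec <| by
    simpa using hg.smul_mem c (htot x).choose_spec

lemma mem_iff_eq_toLinearMap (hg : IsLinRel g) (htot : ∀ x, ∃ y, (x, y) ∈ g)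
    (hmul : ∀ y, ((0 : X), y) ∈ g → y = 0) {x : X} {y : Y} :
    (x, y) ∈ g ↔ y = hg.toLinearMap htot hmul x :=
  ⟨fun h => hg.eq_of_mem hmul h (htot x).choose_spec, fun h => h ▸ (htot x).choose_spec⟩

end IsLinRel

section Adjoint

variable {H K : Type*} [NormedAddCommGroup H] [InnerProductSpace ℂ H]
  [NormedAddCommGroup K] [InnerProductSpace ℂ K]

lemma isLinRel_adjR (S : Set (K × H)) : IsLinRel (adjR S) := by
  refine ⟨{ carrier := adjR S, add_mem' := ?_, zero_mem' := ?_, smul_mem' := ?_ }, rfl⟩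
  · intro a b ha hb q hq
    simp only [Prod.fst_add, Prod.snd_add, inner_add_left, ha q hq, hb q hq]
  · intro q _
    simp
  · intro c a ha q hq
    simp only [Prod.smul_fst, Prod.smul_snd, inner_smul_left, ha q hq]

lemma isClosed_adjR (S : Set (K × H)) : IsClosed (adjR S) := by
  have : adjR S = ⋂ q ∈ S, {p : H × K | ⟪p.1, q.2⟫ = ⟪p.2, q.1⟫} := by
    ext p; simp [adjR]
  rw [this]
  exact isClosed_biInter fun q _ => isClosed_eq (by fun_prop) (by fun_prop)

lemma eq_zero_of_inner_smul_self_eq {l : ℂ} (hl : l.im ≠ 0) {x : H}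
    (hx : ⟪x, l • x⟫ = ⟪l • x, x⟫) : x = 0 := by
  rw [inner_smul_right, inner_smul_left, ← sub_eq_zero, ← sub_mul, Complex.sub_conj] at hx
  simpa [hl, Complex.I_ne_zero] using hx

lemma abs_im_mul_norm_le_norm_sub_smul {g g' : H} (hg : ⟪g, g'⟫ = ⟪g', g⟫) (l : ℂ) :
    |l.im| * ‖g‖ ≤ ‖g' - l • g‖ := by
  have hre : (⟪g, g'⟫).im = 0 := by
    rw [← inner_conj_symm, Complex.conj_eq_iff_im] at hg
    rwa [← inner_conj_symm, Complex.conj_im, neg_eq_zero]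
  have him : (⟪g, g' - l • g⟫).im = -(l.im * ‖g‖ ^ 2) := by
    rw [inner_sub_right, inner_smul_right, inner_self_eq_norm_sq_to_K]
    simp [hre, ← Complex.ofReal_pow]
  rcases eq_or_ne g 0 with rfl | hg0
  · simp
  have hpos : 0 < ‖g‖ := norm_pos_iff.2 hg0
  refine le_of_mul_le_mul_right ?_ hpos
  calc |l.im| * ‖g‖ * ‖g‖ = |(⟪g, g' - l • g⟫).im| := by
        rw [him, abs_neg, abs_mul, abs_of_nonneg (sq_nonneg ‖g‖)]; ring
    _ ≤ ‖⟪g, g' - l • g⟫‖ := Complex.abs_im_le_norm _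
    _ ≤ ‖g‖ * ‖g' - l • g‖ := norm_inner_le_norm _ _
    _ = ‖g' - l • g‖ * ‖g‖ := mul_comm _ _

end Adjoint

section SelfAdjointRelation

variable {H : Type*} [NormedAddCommGroup H] [InnerProductSpace ℂ H] {S : Set (H × H)} {l : ℂ}

lemma norm_le_of_mem_of_eq_adjR (hS : S = adjR S) (hl : l.im ≠ 0) {p : H × H} (hp : p ∈ S) :
    ‖p‖ ≤ (1 + |l.im| + ‖l‖) / |l.im| * ‖p.2 - l • p.1‖ := by
  have hc : 0 < |l.im| := abs_pos.2 hl
  have h1 : ‖p.1‖ ≤ ‖p.2 - l • p.1‖ / |l.im| := by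
    rw [le_div_iff₀ hc, mul_comm]
    exact abs_im_mul_norm_le_norm_sub_smul ((hS ▸ hp : p ∈ adjR S) p hp) l
  have h2 : ‖p.2‖ ≤ ‖p.2 - l • p.1‖ + ‖l‖ * ‖p.1‖ := by
    simpa [norm_smul, add_comm] using norm_le_insert' p.2 (l • p.1)
  rw [Prod.norm_def, max_le_iff, div_mul_eq_mul_div, le_div_iff₀ hc, le_div_iff₀ hc]
  rw [le_div_iff₀ hc] at h1
  constructor <;> nlinarith [norm_nonneg l, norm_nonneg (p.2 - l • p.1), norm_nonneg p.1]

lemma exists_mem_sub_smul_eq_of_eq_adjR [CompleteSpace H] (hS : S = adjR S) (hl : l.im ≠ 0)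
    (y : H) : ∃ p ∈ S, p.2 - l • p.1 = y := by
  obtain ⟨P, hP⟩ : IsLinRel S := hS ▸ isLinRel_adjR S
  have : CompleteSpace P :=
    (hP ▸ hS ▸ isClosed_adjR S : IsClosed (P : Set (H × H))).completeSpace_coe
  let φ : P →L[ℂ] H :=
    (ContinuousLinearMap.snd ℂ H H - l • ContinuousLinearMap.fst ℂ H H).comp P.subtypeL
  have hclosed : IsClosed ((LinearMap.range (φ : P →ₗ[ℂ] H) : Submodule ℂ H) : Set H) := by
    rw [LinearMap.coe_range]
    exact (φ.antilipschitz_of_bound (K := ⟨_, by positivity⟩) fun p =>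
        norm_le_of_mem_of_eq_adjR hS hl (hP ▸ p.2)).isClosed_range φ.uniformContinuous
  have horth : (LinearMap.range (φ : P →ₗ[ℂ] H))ᗮ = ⊥ := by
    refine (Submodule.eq_bot_iff _).2 fun x hx => ?_
    have hx' (q : H × H) (hq : q ∈ S) : ⟪q.2 - l • q.1, x⟫ = 0 :=
      (Submodule.mem_orthogonal _ x).1 hx _ ⟨⟨q, (hP.symm ▸ hq : q ∈ (P : Set (H × H)))⟩, rfl⟩
    have hmem : (x, conj l • x) ∈ S := by
      rw [hS]
      intro q hq
      have := congrArg conj (hx' q hq)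
      simp only [inner_sub_left, inner_smul_left, map_sub, map_mul, inner_conj_symm,
        Complex.conj_conj, map_zero, sub_eq_zero] at this
      simpa [inner_smul_left, mul_comm] using this
    exact eq_zero_of_inner_smul_self_eq (l := conj l) (by simpa using hl)
      ((hS ▸ hmem : _ ∈ adjR S) _ hmem)
  have htop : LinearMap.range (φ : P →ₗ[ℂ] H) = ⊤ := by
    rw [← hclosed.submodule_topologicalClosure_eq]
    exact Submodule.topologicalClosure_eq_top_iff.2 horth
  obtain ⟨p, hp⟩ := LinearMap.range_eq_top.1 htop y
  exact ⟨p, hP ▸ p.2, hp⟩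

end SelfAdjointRelation

section ImaginaryPart

variable {H : Type*} [NormedAddCommGroup H] [InnerProductSpace ℂ H] [CompleteSpace H]

theorem ImOp_eq_imaginaryPart (T : H →L[ℂ] H) : ImOp T = (ℑ T : H →L[ℂ] H) := by
  rw [imaginaryPart_apply_coe, ImOp, ContinuousLinearMap.star_eq_adjoint, ← Complex.coe_smul,
    smul_smul]
  congr 1
  simp [mul_comm]

end ImaginaryPart

section BoundaryPair

variable {E F : Type*} [NormedAddCommGroup E] [InnerProductSpace ℂ E]
  [NormedAddCommGroup F] [InnerProductSpace ℂ F]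
  {A : Set (E × E)} {Γ : Set ((E × E) × (F × F))} {l m : ℂ}

/-- The graph of `u ↦ (γ(l) u, M(l) u)`. -/
def weylRel (Γ : Set ((E × E) × (F × F))) (l : ℂ) : Set (F × (E × F)) :=
  {p | ((p.2.1, l • p.2.1), (p.1, p.2.2)) ∈ Γ}

lemma IsLinRel.weylRel (hΓ : IsLinRel Γ) (l : ℂ) : IsLinRel (weylRel Γ l) := by
  let ψ : F × (E × F) →ₗ[ℂ] (E × E) × (F × F) :=
    { toFun p := ((p.2.1, l • p.2.1), (p.1, p.2.2))
      map_add' _ _ := by simp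
      map_smul' _ _ := by simp [smul_comm l] }
  exact hΓ.preimage ψ

namespace IsBPair

lemma isLinRel (hB : IsBPair A Γ) : IsLinRel Γ := hB.1.1.1

lemma greenPair (hB : IsBPair A Γ) : GreenPair Γ := hB.1.1.2.2

lemma domR_subset (hB : IsBPair A Γ) : domR Γ ⊆ adjR A := hB.1.1.2.1

lemma closure_domR (hB : IsBPair A Γ) : closure (domR Γ) = adjR A := hB.1.2.1

lemma A0_eq_adjR (hB : IsBPair A Γ) : A0 Γ = adjR (A0 Γ) := hB.1.2.2.2

lemma isLinRel_A0 (hB : IsBPair A Γ) : IsLinRel (A0 Γ) := hB.A0_eq_adjR ▸ isLinRel_adjR (A0 Γ)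

lemma ranR_G0 (hB : IsBPair A Γ) : ranR (G0 Γ) = Set.univ := hB.2

lemma A0_subset_adjR (hB : IsBPair A Γ) : A0 Γ ⊆ adjR A :=
  fun _ ⟨_, hb⟩ => hB.domR_subset ⟨_, hb⟩

lemma inner_eq_of_mem_A0 (hB : IsBPair A Γ) {p q : E × E} (hp : p ∈ A0 Γ) (hq : q ∈ A0 Γ) :
    ⟪p.1, q.2⟫ = ⟪p.2, q.1⟫ :=
  (hB.A0_eq_adjR ▸ hp : p ∈ adjR (A0 Γ)) q hq

/-- Green's identity against an element with `Γ₀`-value `b`, which exists as `ran Γ₀ = 𝓗`. -/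
lemma eq_zero_of_mem_mulR (hB : IsBPair A Γ) {b : F}
    (hb : (((0 : E), (0 : E)), ((0 : F), b)) ∈ Γ) : b = 0 := by
  obtain ⟨x, h', hx⟩ : b ∈ ranR (G0 Γ) := hB.ranR_G0 ▸ Set.mem_univ b
  have h := hB.greenPair _ hb _ hx
  simp only [inner_zero_right, sub_zero, sub_self] at h
  exact inner_self_eq_zero.1 h.symm

lemma eq_zero_of_mem_smul (hB : IsBPair A Γ) (hl : l.im ≠ 0) {f : E} {b : F}
    (hf : ((f, l • f), ((0 : F), b)) ∈ Γ) : f = 0 ∧ b = 0 := by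
  have hf0 : f = 0 := eq_zero_of_inner_smul_self_eq hl <| by
    simpa [sub_eq_zero] using hB.greenPair _ hf _ hf
  subst hf0
  exact ⟨rfl, hB.eq_zero_of_mem_mulR (by simpa using hf)⟩

lemma eq_zero_of_mem_weylRel (hB : IsBPair A Γ) (hl : l.im ≠ 0) (y : E × F)
    (hy : ((0 : F), y) ∈ weylRel Γ l) : y = 0 :=
  Prod.ext_iff.2 (hB.eq_zero_of_mem_smul hl hy)

variable [CompleteSpace E]

lemma exists_mem_A0_add (hB : IsBPair A Γ) (hl : l.im ≠ 0) (p : E × E) :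
    ∃ q ∈ A0 Γ, ∃ f : E, p = q + (f, l • f) := by
  obtain ⟨q, hq, hqp⟩ := exists_mem_sub_smul_eq_of_eq_adjR hB.A0_eq_adjR hl (p.2 - l • p.1)
  refine ⟨q, hq, p.1 - q.1, Prod.ext (by simp) ?_⟩
  simp only [Prod.snd_add]
  linear_combination (norm := module) -hqp

lemma exists_mem_weylRel (hB : IsBPair A Γ) (hl : l.im ≠ 0) (u : F) :
    ∃ y, (u, y) ∈ weylRel Γ l := by
  obtain ⟨x, h', hx⟩ : u ∈ ranR (G0 Γ) := hB.ranR_G0 ▸ Set.mem_univ u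
  obtain ⟨q, ⟨b, hb⟩, f, rfl⟩ := hB.exists_mem_A0_add hl x
  exact ⟨(f, h' - b), by simpa [weylRel] using hB.isLinRel.sub_mem hx hb⟩

/-- `u ↦ (γ(l) u, M(l) u)`, with the junk value `0` for real `l`. -/
noncomputable def gammaWeyl (hB : IsBPair A Γ) (l : ℂ) : F →ₗ[ℂ] E × F :=
  if hl : l.im ≠ 0 then
    (hB.isLinRel.weylRel l).toLinearMap (hB.exists_mem_weylRel hl) (hB.eq_zero_of_mem_weylRel hl)
  else 0

noncomputable def gammaField (hB : IsBPair A Γ) (l : ℂ) : F →ₗ[ℂ] E :=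
  LinearMap.fst ℂ E F ∘ₗ hB.gammaWeyl l

noncomputable def weylMap (hB : IsBPair A Γ) (l : ℂ) : F →ₗ[ℂ] F :=
  LinearMap.snd ℂ E F ∘ₗ hB.gammaWeyl l

lemma mem_iff (hB : IsBPair A Γ) (hl : l.im ≠ 0) {f : E} {u b : F} :
    ((f, l • f), (u, b)) ∈ Γ ↔ f = hB.gammaField l u ∧ b = hB.weylMap l u := by
  simp only [gammaField, weylMap, gammaWeyl, dif_pos hl, LinearMap.comp_apply,
    LinearMap.fst_apply, LinearMap.snd_apply]
  exact ((hB.isLinRel.weylRel l).mem_iff_eq_toLinearMap (x := u) (y := (f, b)) _ _).trans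
    Prod.ext_iff

lemma mem_gammaField (hB : IsBPair A Γ) (hl : l.im ≠ 0) (u : F) :
    ((hB.gammaField l u, l • hB.gammaField l u), (u, hB.weylMap l u)) ∈ Γ :=
  (hB.mem_iff hl).2 ⟨rfl, rfl⟩

lemma mem_weyl_iff (hB : IsBPair A Γ) (hl : l.im ≠ 0) {u u' : F} :
    (u, u') ∈ weyl Γ l ↔ u' = hB.weylMap l u :=
  ⟨fun ⟨_, hf⟩ => ((hB.mem_iff hl).1 hf).2, fun h => ⟨_, h ▸ hB.mem_gammaField hl u⟩⟩

lemma inner_weylMap_sub (hB : IsBPair A Γ) (hl : l.im ≠ 0) (hm : m.im ≠ 0) (u v : F) :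
    ⟪v, hB.weylMap l u⟫ - ⟪hB.weylMap m v, u⟫
      = (l - conj m) * ⟪hB.gammaField m v, hB.gammaField l u⟫ := by
  have h := hB.greenPair _ (hB.mem_gammaField hl u) _ (hB.mem_gammaField hm v)
  simp only [inner_smul_right, inner_smul_left] at h
  linear_combination -h

lemma inner_weylMap_conj (hB : IsBPair A Γ) (hl : l.im ≠ 0) (u v : F) :
    ⟪v, hB.weylMap (conj l) u⟫ = ⟪hB.weylMap l v, u⟫ := by
  have h := hB.inner_weylMap_sub (l := conj l) (m := l) (by simpa using hl) hl u v
  rwa [sub_self, zero_mul, sub_eq_zero] at h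

noncomputable def imWeylMap (hB : IsBPair A Γ) (l : ℂ) : F →ₗ[ℂ] F :=
  ((2 : ℂ) * I)⁻¹ • (hB.weylMap l - hB.weylMap (conj l))

lemma ranIm_eq_range (hB : IsBPair A Γ) (hl : l.im ≠ 0) :
    ranIm Γ l = LinearMap.range (hB.imWeylMap l) := by
  ext w
  constructor
  · rintro ⟨u, u', v', hu', hv', rfl⟩
    rw [hB.mem_weyl_iff hl] at hu'
    rw [hB.mem_weyl_iff (by simpa using hl)] at hv'
    exact ⟨u, by simp [imWeylMap, hu', hv']⟩
  · rintro ⟨u, rfl⟩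
    exact ⟨u, _, _, (hB.mem_weyl_iff hl).2 rfl, (hB.mem_weyl_iff (by simpa using hl)).2 rfl, rfl⟩

lemma inner_imWeylMap (hB : IsBPair A Γ) (hl : l.im ≠ 0) (x u : F) :
    ⟪x, hB.imWeylMap l u⟫ = l.im * ⟪hB.gammaField l x, hB.gammaField l u⟫ := by
  rw [imWeylMap, LinearMap.smul_apply, LinearMap.sub_apply, inner_smul_right, inner_sub_right,
    hB.inner_weylMap_conj hl, hB.inner_weylMap_sub hl hl, Complex.sub_conj, ← mul_assoc]
  congr 1
  field_simp
  push_cast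
  ring

lemma mem_orthogonal_ranIm_iff (hB : IsBPair A Γ) (hl : l.im ≠ 0) {x : F} :
    x ∈ (Submodule.span ℂ (ranIm Γ l))ᗮ ↔ hB.gammaField l x = 0 := by
  simp only [hB.ranIm_eq_range hl, Submodule.span_eq, Submodule.mem_orthogonal',
    LinearMap.mem_range, forall_exists_index, forall_apply_eq_imp_iff, hB.inner_imWeylMap hl]
  refine ⟨fun h => ?_, fun h u => by simp [h]⟩
  simpa [hl] using h x

lemma gammaField_eq_zero_iff (hB : IsBPair A Γ) (hl : l.im ≠ 0) {x : F} :
    hB.gammaField l x = 0 ↔ ∃ b, (((0 : E), (0 : E)), (x, b)) ∈ Γ :=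
  ⟨fun h => ⟨_, by simpa [h] using hB.mem_gammaField hl x⟩,
    fun ⟨_, hb⟩ => ((hB.mem_iff hl).1 (by simpa using hb)).1.symm⟩

/-- Write `x = q + (g, i g)` with `q ∈ A₀`: then `g ∈ ran γ(i)`, and `x.1 - g = q.1` is bounded
by `‖q.2 - i q.1‖ = ‖x.2 - i x.1‖` since `A₀` is symmetric. -/
lemma exists_norm_sub_gammaField_le (hB : IsBPair A Γ) {x : E × E} (hx : x ∈ domR Γ) :
    ∃ u, ‖x.1 - hB.gammaField I u‖ ≤ ‖x.2 - I • x.1‖ := by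
  obtain ⟨⟨u, h'⟩, hx⟩ := hx
  obtain ⟨q, ⟨b, hb⟩, g, rfl⟩ := hB.exists_mem_A0_add (l := I) (by simp) x
  have hg : g = hB.gammaField I u :=
    ((hB.mem_iff (by simp)).1 (by simpa using hB.isLinRel.sub_mem hx hb)).1
  refine ⟨u, ?_⟩
  have h := abs_im_mul_norm_le_norm_sub_smul (hB.inner_eq_of_mem_A0 ⟨b, hb⟩ ⟨b, hb⟩) I
  simpa [← hg, smul_add, add_sub_add_comm] using h

lemma mem_closure_range_gammaField (hB : IsBPair A Γ) {f : E} (hf : (f, I • f) ∈ adjR A) :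
    f ∈ closure (Set.range (hB.gammaField I)) := by
  rw [← hB.closure_domR] at hf
  obtain ⟨x, hx, hlim⟩ := mem_closure_iff_seq_limit.1 hf
  choose u hu using fun n => hB.exists_norm_sub_gammaField_le (hx n)
  have hfst : Tendsto (fun n => (x n).1) atTop (𝓝 f) := (continuous_fst.tendsto _).comp hlim
  have hsnd : Tendsto (fun n => (x n).2) atTop (𝓝 (I • f)) := (continuous_snd.tendsto _).comp hlim
  have h0 : Tendsto (fun n => (x n).2 - I • (x n).1) atTop (𝓝 0) := by
    simpa using hsnd.sub (hfst.const_smul I)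
  have h1 : Tendsto (fun n => (x n).1 - hB.gammaField I (u n)) atTop (𝓝 0) :=
    squeeze_zero_norm hu (by simpa using h0.norm)
  exact mem_closure_of_tendsto (by simpa using hfst.sub h1)
    (Eventually.of_forall fun n => ⟨u n, rfl⟩)

variable [CompleteSpace F]

lemma HsSub_eq_HsSub (hB : IsBPair A Γ) (hl : l.im ≠ 0) (hm : m.im ≠ 0) :
    HsSub Γ l = HsSub Γ m := by
  have h : (Submodule.span ℂ (ranIm Γ l))ᗮ = (Submodule.span ℂ (ranIm Γ m))ᗮ := by
    ext x
    rw [hB.mem_orthogonal_ranIm_iff hl, hB.mem_orthogonal_ranIm_iff hm,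
      hB.gammaField_eq_zero_iff hl, hB.gammaField_eq_zero_iff hm]
  rw [HsSub, HsSub, ← Submodule.orthogonal_orthogonal_eq_closure,
    ← Submodule.orthogonal_orthogonal_eq_closure, h]

noncomputable def weylI (hB : IsBPair A Γ) : F →L[ℂ] F :=
  ⟨hB.weylMap I, LinearMap.continuous_of_inner_map_eq (S := hB.weylMap (conj I))
    fun x y => (hB.inner_weylMap_conj (by simp) y x).symm⟩

lemma weylI_apply (hB : IsBPair A Γ) (u : F) : hB.weylI u = hB.weylMap I u := rfl

lemma ImOp_weylI_apply (hB : IsBPair A Γ) (u : F) : ImOp hB.weylI u = hB.imWeylMap I u := by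
  have hadj : ContinuousLinearMap.adjoint hB.weylI u = hB.weylMap (conj I) u :=
    ext_inner_left ℂ fun x => by
      rw [ContinuousLinearMap.adjoint_inner_right, weylI_apply, hB.inner_weylMap_conj (by simp)]
  simp [ImOp, imWeylMap, hadj, weylI_apply]

lemma inner_ImOp_weylI (hB : IsBPair A Γ) (x u : F) :
    ⟪x, ImOp hB.weylI u⟫ = ⟪hB.gammaField I x, hB.gammaField I u⟫ := by
  rw [hB.ImOp_weylI_apply, hB.inner_imWeylMap (by simp), Complex.I_im, Complex.ofReal_one, one_mul]

lemma ImOp_weylI_nonneg (hB : IsBPair A Γ) : 0 ≤ ImOp hB.weylI := by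
  rw [ContinuousLinearMap.nonneg_iff_isPositive, ContinuousLinearMap.isPositive_iff_complex]
  intro x
  rw [← inner_conj_symm, inner_ImOp_weylI, inner_self_eq_norm_sq_to_K]
  rw [map_pow, RCLike.conj_ofReal, ← RCLike.ofReal_pow, RCLike.ofReal_re]
  exact ⟨rfl, by positivity⟩

noncomputable def sqrtImWeyl (hB : IsBPair A Γ) : F →L[ℂ] F := CFC.sqrt (ImOp hB.weylI)

lemma norm_sqrtImWeyl_apply (hB : IsBPair A Γ) (u : F) :
    ‖hB.sqrtImWeyl u‖ = ‖hB.gammaField I u‖ := by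
  rw [norm_eq_sqrt_re_inner (𝕜 := ℂ), norm_eq_sqrt_re_inner (𝕜 := ℂ), sqrtImWeyl,
    CFC.inner_sqrt_apply_sqrt_apply hB.ImOp_weylI_nonneg, inner_ImOp_weylI]

lemma sqrtImWeyl_apply_eq_zero_iff (hB : IsBPair A Γ) {u : F} :
    hB.sqrtImWeyl u = 0 ↔ u ∈ (HsSub Γ I)ᗮ := by
  rw [← norm_eq_zero, norm_sqrtImWeyl_apply, norm_eq_zero, ← hB.mem_orthogonal_ranIm_iff (by simp),
    HsSub, ← Submodule.orthogonal_orthogonal_eq_closure, Submodule.triorthogonal_eq_orthogonal]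

lemma inner_sqrtImWeyl_apply_left (hB : IsBPair A Γ) (x y : F) :
    ⟪hB.sqrtImWeyl x, y⟫ = ⟪x, hB.sqrtImWeyl y⟫ :=
  (CFC.sqrt_nonneg (ImOp hB.weylI)).isSelfAdjoint.isSymmetric x y

lemma sqrtImWeyl_apply_mem (hB : IsBPair A Γ) (u : F) : hB.sqrtImWeyl u ∈ HsSub Γ I := by
  rw [← Submodule.orthogonal_orthogonal (HsSub Γ I)]
  intro y hy
  rw [← hB.inner_sqrtImWeyl_apply_left, hB.sqrtImWeyl_apply_eq_zero_iff.2 hy, inner_zero_left]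

/-- The operator `G` of the statement. -/
noncomputable def weylFactor (hB : IsBPair A Γ) : F →L[ℂ] HsSub Γ I :=
  hB.sqrtImWeyl.codRestrict _ hB.sqrtImWeyl_apply_mem

lemma coe_weylFactor_apply (hB : IsBPair A Γ) (u : F) :
    (hB.weylFactor u : F) = hB.sqrtImWeyl u := rfl

lemma weylFactor_apply_eq_zero_iff (hB : IsBPair A Γ) {u : F} :
    hB.weylFactor u = 0 ↔ u ∈ (HsSub Γ I)ᗮ := by
  rw [← hB.sqrtImWeyl_apply_eq_zero_iff, ← coe_weylFactor_apply, Submodule.coe_eq_zero]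

lemma norm_weylFactor_apply (hB : IsBPair A Γ) (u : F) :
    ‖hB.weylFactor u‖ = ‖hB.gammaField I u‖ := by
  rw [Submodule.coe_norm, coe_weylFactor_apply, norm_sqrtImWeyl_apply]

lemma adjoint_weylFactor_apply_weylFactor (hB : IsBPair A Γ) (u : F) :
    ContinuousLinearMap.adjoint hB.weylFactor (hB.weylFactor u) = ImOp hB.weylI u :=
  ext_inner_left ℂ fun v => by
    rw [ContinuousLinearMap.adjoint_inner_right, Submodule.coe_inner, coe_weylFactor_apply,
      coe_weylFactor_apply, sqrtImWeyl, CFC.inner_sqrt_apply_sqrt_apply hB.ImOp_weylI_nonneg]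

lemma denseRange_weylFactor (hB : IsBPair A Γ) : DenseRange hB.weylFactor := by
  change Dense (Set.range (hB.weylFactor : F →ₗ[ℂ] HsSub Γ I))
  rw [← LinearMap.coe_range, Submodule.dense_iff_topologicalClosure_eq_top,
    Submodule.topologicalClosure_eq_top_iff, Submodule.eq_bot_iff]
  intro w hw
  have hQw : hB.sqrtImWeyl w = 0 := ext_inner_left ℂ fun u => by
    rw [← hB.inner_sqrtImWeyl_apply_left, ← coe_weylFactor_apply, ← Submodule.coe_inner,
      inner_zero_right]
    exact (Submodule.mem_orthogonal _ w).1 hw _ ⟨u, rfl⟩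
  exact Subtype.ext <| inner_self_eq_zero.1 <| hB.sqrtImWeyl_apply_eq_zero_iff.1 hQw w w.2

/-- The isometry `𝓗_s → 𝔑_i(A*)` determined by `U G = γ(i)`. -/
noncomputable def defectIsometry (hB : IsBPair A Γ) : HsSub Γ I →L[ℂ] E :=
  (hB.gammaField I).extendOfNorm (hB.weylFactor : F →ₗ[ℂ] HsSub Γ I)

lemma defectIsometry_weylFactor (hB : IsBPair A Γ) (u : F) :
    hB.defectIsometry (hB.weylFactor u) = hB.gammaField I u :=
  LinearMap.extendOfNorm_eq hB.denseRange_weylFactor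
    ⟨1, fun u => by rw [one_mul]; exact (hB.norm_weylFactor_apply u).ge⟩ u

lemma norm_defectIsometry_apply (hB : IsBPair A Γ) (v : HsSub Γ I) :
    ‖hB.defectIsometry v‖ = ‖v‖ :=
  LinearMap.norm_extendOfNorm_apply hB.denseRange_weylFactor
    (fun u => (hB.norm_weylFactor_apply u).symm) v

lemma adjoint_defectIsometry_apply (hB : IsBPair A Γ) (v : HsSub Γ I) :
    ContinuousLinearMap.adjoint hB.defectIsometry (hB.defectIsometry v) = v :=
  ContinuousLinearMap.ext_iff.1
    ((ContinuousLinearMap.norm_map_iff_adjoint_comp_self _).1 hB.norm_defectIsometry_apply) v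

lemma mem_adjR_defectIsometry (hB : IsBPair A Γ) (v : HsSub Γ I) :
    (hB.defectIsometry v, I • hB.defectIsometry v) ∈ adjR A := by
  refine hB.denseRange_weylFactor.induction (fun _ ⟨u, hu⟩ => ?_)
    ((isClosed_adjR A).preimage (by fun_prop)) v
  rw [← hu, defectIsometry_weylFactor]
  exact hB.domR_subset ⟨_, hB.mem_gammaField (by simp) u⟩

lemma exists_defectIsometry_eq (hB : IsBPair A Γ) {f : E} (hf : (f, I • f) ∈ adjR A) :
    ∃ v, hB.defectIsometry v = f := by
  have hclosed : IsClosed (Set.range hB.defectIsometry) :=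
    (AddMonoidHomClass.isometry_of_norm _
      hB.norm_defectIsometry_apply).isUniformInducing.isComplete_range.isClosed
  have hsub : Set.range (hB.gammaField I) ⊆ Set.range hB.defectIsometry :=
    fun _ ⟨u, hu⟩ => ⟨_, (hB.defectIsometry_weylFactor u).trans hu⟩
  exact hclosed.closure_subset_iff.2 hsub (hB.mem_closure_range_gammaField hf)

lemma adjoint_weylFactor_adjoint_defectIsometry (hB : IsBPair A Γ) {q : E × E} {b : F}
    (hq : (q, ((0 : F), b)) ∈ Γ) :
    ContinuousLinearMap.adjoint hB.weylFactor
      (ContinuousLinearMap.adjoint hB.defectIsometry (q.2 + I • q.1)) = b :=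
  ext_inner_left ℂ fun u => by
    rw [ContinuousLinearMap.adjoint_inner_right, ContinuousLinearMap.adjoint_inner_right,
      defectIsometry_weylFactor]
    have h := hB.greenPair _ hq _ (hB.mem_gammaField (l := I) (by simp) u)
    simp only [inner_smul_left, inner_zero_right, sub_zero, Complex.conj_I] at h
    rw [inner_add_right, inner_smul_right]
    linear_combination h

lemma inner_defectIsometry (hB : IsBPair A Γ) (v w : HsSub Γ I) :
    ⟪hB.defectIsometry v, hB.defectIsometry w⟫ = ⟪v, w⟫ := by
  rw [← ContinuousLinearMap.adjoint_inner_right, adjoint_defectIsometry_apply]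

noncomputable def ordinaryMap (hB : IsBPair A Γ) :
    (E × E) × HsSub Γ I →ₗ[ℂ] (E × E) × (HsSub Γ I × HsSub Γ I) where
  toFun r := (r.1 + (hB.defectIsometry r.2, I • hB.defectIsometry r.2),
    (r.2, ContinuousLinearMap.adjoint hB.defectIsometry (r.1.2 + I • r.1.1) + I • r.2))
  map_add' _ _ := by
    ext <;> simp only [Prod.fst_add, Prod.snd_add, map_add, smul_add, Submodule.coe_add] <;> abel
  map_smul' _ _ := by
    ext <;> simp [smul_add, smul_comm I]

lemma ordinaryMap_apply (hB : IsBPair A Γ) (q : E × E) (v : HsSub Γ I) :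
    hB.ordinaryMap (q, v) = (q + (hB.defectIsometry v, I • hB.defectIsometry v),
      (v, ContinuousLinearMap.adjoint hB.defectIsometry (q.2 + I • q.1) + I • v)) := rfl

/-- `Γ⁰` vanishes in its first component on `A₀` and is `(U⁻¹, i U⁻¹)` on `𝔑_i(A*)`. -/
noncomputable def ordinaryTriple (hB : IsBPair A Γ) : Set ((E × E) × (HsSub Γ I × HsSub Γ I)) :=
  hB.ordinaryMap '' (A0 Γ ×ˢ Set.univ)

lemma mem_ordinaryTriple (hB : IsBPair A Γ) {p : (E × E) × (HsSub Γ I × HsSub Γ I)} :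
    p ∈ hB.ordinaryTriple ↔ ∃ q ∈ A0 Γ, ∃ v, hB.ordinaryMap (q, v) = p := by
  simp [ordinaryTriple]

lemma isLinRel_ordinaryTriple (hB : IsBPair A Γ) : IsLinRel hB.ordinaryTriple :=
  hB.isLinRel_A0.prod_univ.image _

lemma greenPair_ordinaryTriple (hB : IsBPair A Γ) : GreenPair hB.ordinaryTriple := by
  intro p hp p' hp'
  obtain ⟨q, hq, v, rfl⟩ := hB.mem_ordinaryTriple.1 hp
  obtain ⟨q', hq', v', rfl⟩ := hB.mem_ordinaryTriple.1 hp'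
  simp only [ordinaryMap_apply, Prod.fst_add, Prod.snd_add, inner_add_left, inner_add_right,
    inner_smul_left, inner_smul_right, ContinuousLinearMap.adjoint_inner_right,
    ContinuousLinearMap.adjoint_inner_left, inner_defectIsometry, Complex.conj_I]
  linear_combination hB.inner_eq_of_mem_A0 hq' hq

lemma mulR_ordinaryTriple (hB : IsBPair A Γ) : mulR hB.ordinaryTriple = {0} := by
  refine Set.eq_singleton_iff_unique_mem.2 ⟨hB.isLinRel_ordinaryTriple.zero_mem, fun y hy => ?_⟩
  obtain ⟨q, hq, v, h⟩ := hB.mem_ordinaryTriple.1 hy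
  simp only [ordinaryMap_apply, Prod.mk.injEq] at h
  obtain ⟨h0, rfl, rfl⟩ := h
  obtain rfl : q = -(hB.defectIsometry v, I • hB.defectIsometry v) := eq_neg_of_add_eq_zero_left h0
  have hUv := neg_neg (_ : E × E) ▸ hB.isLinRel_A0.neg_mem hq
  have hv : v = 0 := by
    rw [← norm_eq_zero, ← hB.norm_defectIsometry_apply, norm_eq_zero]
    exact eq_zero_of_inner_smul_self_eq (by simp) (hB.inner_eq_of_mem_A0 hUv hUv)
  subst hv
  simp

lemma domR_ordinaryTriple (hB : IsBPair A Γ) : domR hB.ordinaryTriple = adjR A := by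
  ext x
  constructor
  · rintro ⟨y, hy⟩
    obtain ⟨q, hq, v, h⟩ := hB.mem_ordinaryTriple.1 hy
    have hx : x = (hB.ordinaryMap (q, v)).1 := by rw [h]
    rw [hx, ordinaryMap_apply]
    exact (isLinRel_adjR A).add_mem (hB.A0_subset_adjR hq) (hB.mem_adjR_defectIsometry v)
  · intro hx
    obtain ⟨q, hq, f, rfl⟩ := hB.exists_mem_A0_add (l := I) (by simp) x
    obtain ⟨v, rfl⟩ := hB.exists_defectIsometry_eq <| by
      simpa using (isLinRel_adjR A).sub_mem hx (hB.A0_subset_adjR hq)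
    exact ⟨_, hB.mem_ordinaryTriple.2 ⟨q, hq, v, rfl⟩⟩

lemma ranR_ordinaryTriple (hB : IsBPair A Γ) : ranR hB.ordinaryTriple = Set.univ := by
  refine Set.eq_univ_of_forall fun y => ?_
  obtain ⟨q, hq, hqy⟩ := exists_mem_sub_smul_eq_of_eq_adjR hB.A0_eq_adjR (l := -I) (by simp)
    (hB.defectIsometry (y.2 - I • y.1))
  refine ⟨_, hB.mem_ordinaryTriple.2 ⟨q, hq, y.1, Prod.ext rfl (Prod.ext rfl ?_)⟩⟩
  rw [neg_smul, sub_neg_eq_add] at hqy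
  show ContinuousLinearMap.adjoint hB.defectIsometry (q.2 + I • q.1) + I • y.1 = y.2
  rw [hqy, adjoint_defectIsometry_apply, sub_add_cancel]

lemma isOrdinaryBT_ordinaryTriple (hB : IsBPair A Γ) : IsOrdinaryBT A hB.ordinaryTriple :=
  ⟨⟨hB.isLinRel_ordinaryTriple, hB.domR_ordinaryTriple.subset, hB.greenPair_ordinaryTriple⟩,
    hB.mulR_ordinaryTriple, hB.domR_ordinaryTriple, hB.ranR_ordinaryTriple⟩

lemma realPart_weylI_add (hB : IsBPair A Γ) (u : F) :
    (ℜ hB.weylI : F →L[ℂ] F) u + I • ImOp hB.weylI u = hB.weylMap I u := by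
  rw [ImOp_eq_imaginaryPart, ← weylI_apply]
  exact congr($(realPart_add_I_smul_imaginaryPart hB.weylI) u)

lemma mem_iff_exists_mem_ordinaryTriple (hB : IsBPair A Γ) {x : E × E} {u u' : F} :
    (x, (u, u')) ∈ Γ ↔ ∃ w, (x, (hB.weylFactor u, w)) ∈ hB.ordinaryTriple ∧
      u' = (ℜ hB.weylI : F →L[ℂ] F) u + ContinuousLinearMap.adjoint hB.weylFactor w := by
  have hM := hB.realPart_weylI_add u
  constructor
  · intro hx
    obtain ⟨q, ⟨b, hb⟩, g, rfl⟩ := hB.exists_mem_A0_add (l := I) (by simp) x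
    obtain ⟨hg, hu'⟩ := (hB.mem_iff (l := I) (by simp)).1 (by simpa using hB.isLinRel.sub_mem hx hb)
    refine ⟨ContinuousLinearMap.adjoint hB.defectIsometry (q.2 + I • q.1) + I • hB.weylFactor u,
      hB.mem_ordinaryTriple.2 ⟨q, ⟨b, hb⟩, hB.weylFactor u, ?_⟩, ?_⟩
    · rw [ordinaryMap_apply, defectIsometry_weylFactor, ← hg]
    · rw [map_add, map_smul, hB.adjoint_weylFactor_adjoint_defectIsometry hb,
        adjoint_weylFactor_apply_weylFactor]
      linear_combination (norm := module) hu' - hM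
  · rintro ⟨w, hw, rfl⟩
    obtain ⟨q, ⟨b, hb⟩, v, h⟩ := hB.mem_ordinaryTriple.1 hw
    simp only [ordinaryMap_apply, Prod.mk.injEq] at h
    obtain ⟨rfl, rfl, rfl⟩ := h
    convert hB.isLinRel.add_mem hb (hB.mem_gammaField (l := I) (by simp) u) using 3
    · simp [defectIsometry_weylFactor]
    · simp
    · rw [map_add, map_smul, hB.adjoint_weylFactor_adjoint_defectIsometry hb,
        adjoint_weylFactor_apply_weylFactor]
      simp only [Prod.snd_add]
      linear_combination (norm := module) hM

lemma eq_setOf_ordinaryTriple (hB : IsBPair A Γ) :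
    Γ = {p | ∃ v w : HsSub Γ I, (p.1, (v, w)) ∈ hB.ordinaryTriple ∧ hB.weylFactor p.2.1 = v ∧
      p.2.2 = (ℜ hB.weylI : F →L[ℂ] F) p.2.1 + ContinuousLinearMap.adjoint hB.weylFactor w} := by
  ext ⟨x, u, u'⟩
  rw [hB.mem_iff_exists_mem_ordinaryTriple]
  constructor
  · rintro ⟨w, hw, rfl⟩
    exact ⟨_, w, hw, rfl, rfl⟩
  · rintro ⟨_, w, hw, rfl, hu'⟩
    exact ⟨w, hw, hu'⟩

lemma weyl_eq (hB : IsBPair A Γ) (l : ℂ) :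
    weyl Γ l = {p | ∃ w, (hB.weylFactor p.1, w) ∈ weyl hB.ordinaryTriple l ∧
      p.2 = ContinuousLinearMap.adjoint hB.weylFactor w + (ℜ hB.weylI : F →L[ℂ] F) p.1} := by
  ext ⟨u, u'⟩
  constructor
  · rintro ⟨f, hf⟩
    obtain ⟨w, hw, rfl⟩ := hB.mem_iff_exists_mem_ordinaryTriple.1 hf
    exact ⟨w, ⟨f, hw⟩, add_comm _ _⟩
  · rintro ⟨w, ⟨f, hw⟩, hu'⟩
    exact ⟨f, hB.mem_iff_exists_mem_ordinaryTriple.2 ⟨w, hw, hu'.trans (add_comm _ _)⟩⟩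

end IsBPair

end BoundaryPair

variable {E F : Type*} [NormedAddCommGroup E] [InnerProductSpace ℂ E] [CompleteSpace E]
  [NormedAddCommGroup F] [InnerProductSpace ℂ F] [CompleteSpace F]

theorem statement9_general (A : Set (E × E)) (Γ : Set ((E × E) × (F × F)))
    (hB : IsBPair A Γ) :
    (∀ l m : ℂ, l.im ≠ 0 → m.im ≠ 0 → HsSub Γ l = HsSub Γ m) ∧
    ∃ Γ0 : Set ((E × E) × (↥(HsSub Γ Complex.I) × ↥(HsSub Γ Complex.I))),
      IsOrdinaryBT A Γ0 ∧
      ∃ Eop : F →L[ℂ] F, IsSelfAdjoint Eop ∧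
      ∃ G : F →L[ℂ] ↥(HsSub Γ Complex.I),
        {u : F | G u = 0} = ((HsSub Γ Complex.I)ᗮ : Set F) ∧
        Γ = {q : (E × E) × (F × F) | ∃ v w : ↥(HsSub Γ Complex.I),
            (q.1, (v, w)) ∈ Γ0 ∧ G q.2.1 = v ∧
            q.2.2 = Eop q.2.1 + ContinuousLinearMap.adjoint G w} ∧
        ∀ l : ℂ, l.im ≠ 0 →
          weyl Γ l = {p : F × F | ∃ w : ↥(HsSub Γ Complex.I),
            (G p.1, w) ∈ weyl Γ0 l ∧ p.2 = ContinuousLinearMap.adjoint G w + Eop p.1} := by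
  refine ⟨fun l m hl hm => hB.HsSub_eq_HsSub hl hm, hB.ordinaryTriple,
    hB.isOrdinaryBT_ordinaryTriple, ℜ hB.weylI, (ℜ hB.weylI).2, hB.weylFactor, ?_,
    hB.eq_setOf_ordinaryTriple, fun l _ => hB.weyl_eq l⟩
  ext u
  exact hB.weylFactor_apply_eq_zero_iff

/-- every B-generalized boundary pair is a triangular transform of an
ordinary boundary triple on `𝓗_s = clos (ran Im M(λ))`, with `M = G*M₀G + E`. -/
theorem statement9 (A : Set (E × E)) (Γ : Set ((E × E) × (F × F)))
    (hA : IsClosedSymRel A) (hB : IsBPair A Γ) :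
    (∀ l m : ℂ, l.im ≠ 0 → m.im ≠ 0 → HsSub Γ l = HsSub Γ m) ∧
    ∃ Γ0 : Set ((E × E) × (↥(HsSub Γ Complex.I) × ↥(HsSub Γ Complex.I))),
      IsOrdinaryBT A Γ0 ∧
      ∃ Eop : F →L[ℂ] F, IsSelfAdjoint Eop ∧
      ∃ G : F →L[ℂ] ↥(HsSub Γ Complex.I),
        {u : F | G u = 0} = ((HsSub Γ Complex.I)ᗮ : Set F) ∧
        Γ = {q : (E × E) × (F × F) | ∃ v w : ↥(HsSub Γ Complex.I),
            (q.1, (v, w)) ∈ Γ0 ∧ G q.2.1 = v ∧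
            q.2.2 = Eop q.2.1 + ContinuousLinearMap.adjoint G w} ∧
        ∀ l : ℂ, l.im ≠ 0 →
          weyl Γ l = {p : F × F | ∃ w : ↥(HsSub Γ Complex.I),
            (G p.1, w) ∈ weyl Γ0 l ∧ p.2 = ContinuousLinearMap.adjoint G w + Eop p.1} :=
  statement9_general A Γ hB

end BT
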